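/- Transitivity of the betterness relation validates Lewis's axiom CV: in every preference model M = (W, ≽, V) whose relation ≽ is transitive, every world satisfies every instance of the schema (○(ψ/φ) ∧ ¬○(¬χ/φ)) → ○(ψ/(φ∧χ)). -/

import Mathlib

/-- Formulas of Åqvist's dyadic deontic logic **E**:
`φ ::= p | ¬φ | φ∧φ | □φ | ○(φ/φ)`.
`EForm.ob ψ φ` denotes `○(ψ/φ)` ("ψ is obligatory, given φ"). -/
inductive EForm : Type where
  | atom : ℕ → EForm
  | neg  : EForm → EForm
  | conj : EForm → EForm → EForm
  | box  : EForm → EForm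
  | ob   : EForm → EForm → EForm
deriving DecidableEq

/-- Material implication, defined classically. -/
def EForm.impl (φ ψ : EForm) : EForm := .neg (.conj φ (.neg ψ))

/-- Biconditional. -/
def EForm.iff' (φ ψ : EForm) : EForm := .conj (φ.impl ψ) (ψ.impl φ)

/-- A preference model `M = (W, ≽, V)`: a nonempty set of worlds, a betterness
relation, and a valuation. -/
structure PrefModel where
  W : Type
  ne : Nonempty W
  R : W → W → Prop
  V : ℕ → W → Prop

/-- Satisfaction `M,s ⊨ φ`. In particular
`M,s ⊨ ○(ψ/φ)` iff `opt_≽(‖φ‖) ⊆ ‖ψ‖`, where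
`opt_≽(‖φ‖) = {w ∈ ‖φ‖ : ∀ y, (M,y ⊨ φ) → w ≽ y}`. -/
def PrefModel.sat (M : PrefModel) : M.W → EForm → Prop
  | s, .atom n   => M.V n s
  | s, .neg φ    => ¬ PrefModel.sat M s φ
  | s, .conj φ ψ => PrefModel.sat M s φ ∧ PrefModel.sat M s ψ
  | _, .box φ    => ∀ t, PrefModel.sat M t φ
  | _, .ob ψ φ   => ∀ w, (PrefModel.sat M w φ ∧ ∀ y, PrefModel.sat M y φ → M.R w y) →
                     PrefModel.sat M w ψ

/-- Validity in the class of all preference models. -/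
def EValid (φ : EForm) : Prop := ∀ (M : PrefModel) (s : M.W), M.sat s φ

/-! If some optimal `φ`-world satisfies `χ`, then by transitivity every optimal `(φ ∧ χ)`-world,
being at least as good as that one, is at least as good as every `φ`-world; so it is an optimal
`φ`-world and hence satisfies `ψ`. -/

/-- `opt_≽(A)`. -/
def optimal {α : Type*} (r : α → α → Prop) (A : Set α) : Set α :=
  {w | w ∈ A ∧ ∀ y ∈ A, r w y}

theorem optimal_inter_subset {α : Type*} {r : α → α → Prop} (hr : Transitive r)
    {A B : Set α} {w : α} (hwA : w ∈ optimal r A) (hwB : w ∈ B) :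
    optimal r (A ∩ B) ⊆ optimal r A := by
  rintro v ⟨⟨hvA, -⟩, hv_best⟩
  have hvw : r v w := hv_best w ⟨hwA.1, hwB⟩
  exact ⟨hvA, fun y hy => hr hvw (hwA.2 y hy)⟩

namespace PrefModel

variable (M : PrefModel)

/-- The truth set `‖φ‖`. -/
def truthSet (φ : EForm) : Set M.W := {w | M.sat w φ}

theorem truthSet_conj (φ ψ : EForm) : M.truthSet (.conj φ ψ) = M.truthSet φ ∩ M.truthSet ψ :=
  rfl

theorem sat_impl {s : M.W} {φ ψ : EForm} : M.sat s (φ.impl ψ) ↔ (M.sat s φ → M.sat s ψ) := by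
  simp only [EForm.impl, sat, not_and, not_not]

theorem sat_ob {s : M.W} {ψ φ : EForm} :
    M.sat s (.ob ψ φ) ↔ optimal M.R (M.truthSet φ) ⊆ M.truthSet ψ :=
  Iff.rfl

theorem sat_not_ob_neg {s : M.W} {χ φ : EForm} :
    ¬ M.sat s (.ob (.neg χ) φ) ↔ ∃ w ∈ optimal M.R (M.truthSet φ), w ∈ M.truthSet χ := by
  rw [sat_ob, Set.not_subset]
  exact exists_congr fun _ => and_congr_right fun _ => not_not

end PrefModel

/-- **Transitivity of betterness validates Lewis's axiom CV**: in every
preference model with transitive `≽`, every world satisfies every instance of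
`(○(ψ/φ) ∧ ¬○(¬χ/φ)) → ○(ψ/(φ∧χ))`. -/
theorem transitive_validates_CV :
    ∀ M : PrefModel, Transitive M.R →
      ∀ (φ ψ χ : EForm) (s : M.W),
        M.sat s ((EForm.conj (EForm.ob ψ φ) (EForm.neg (EForm.ob (EForm.neg χ) φ))).impl
          (EForm.ob ψ (EForm.conj φ χ))) := by
  intro M hR φ ψ χ s
  rw [M.sat_impl]
  rintro ⟨hψ, hχ⟩
  obtain ⟨w, hw_opt, hwχ⟩ := M.sat_not_ob_neg.mp hχ
  rw [M.sat_ob, M.truthSet_conj]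
  exact (optimal_inter_subset hR hw_opt hwχ).trans (M.sat_ob.mp hψ)
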